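/- Let x* ∈ ℝⁿ be a strict saddle point of f and let 0 < α < 1/L. Then the Jacobian Dg_{αf}(x*) of the block coordinate gradient descent map g_{αf} at x* has at least one (complex) eigenvalue whose magnitude is strictly greater than one. -/

import Mathlib

open Matrix MeasureTheory Filter Topology

noncomputable section

/-- A map is a (C¹) diffeomorphism if it is continuously differentiable, bijective,
and its inverse is continuously differentiable. -/
def IsDiffeomorphism {E : Type*} [NormedAddCommGroup E] [NormedSpace ℝ E] (g : E → E) : Prop :=
  ContDiff ℝ 1 g ∧ Function.Bijective g ∧ ContDiff ℝ 1 (Function.invFun g)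

/-- Jacobian matrix of a self-map of a Euclidean space. -/
def jacobianMatrix {ι : Type*} [Fintype ι] [DecidableEq ι]
    (g : EuclideanSpace ℝ ι → EuclideanSpace ℝ ι) (x : EuclideanSpace ℝ ι) :
    Matrix ι ι ℝ :=
  Matrix.of fun i j => fderiv ℝ g x (EuclideanSpace.single j 1) i

/-- The Hessian matrix of `f` at `x` (Jacobian of the gradient). -/
def hessianMatrix {ι : Type*} [Fintype ι] [DecidableEq ι]
    (f : EuclideanSpace ℝ ι → ℝ) (x : EuclideanSpace ℝ ι) : Matrix ι ι ℝ :=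
  jacobianMatrix (gradient f) x

/-- `z` is an eigenvalue (over `ℂ`) of the real matrix `M`. -/
def IsEigenvalue {ι : Type*} [Fintype ι] (M : Matrix ι ι ℝ) (z : ℂ) : Prop :=
  ∃ v : ι → ℂ, v ≠ 0 ∧ (M.map Complex.ofReal).mulVec v = z • v

/-- A real matrix has a negative (real) eigenvalue. -/
def HasNegEigenvalue {ι : Type*} [Fintype ι] (M : Matrix ι ι ℝ) : Prop :=
  ∃ (c : ℝ) (v : ι → ℝ), c < 0 ∧ v ≠ 0 ∧ M.mulVec v = c • v

/-- Strict saddle point: critical point whose Hessian has a negative eigenvalue. -/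
def IsStrictSaddle {ι : Type*} [Fintype ι] [DecidableEq ι]
    (f : EuclideanSpace ℝ ι → ℝ) (x : EuclideanSpace ℝ ι) : Prop :=
  gradient f x = 0 ∧ HasNegEigenvalue (hessianMatrix f x)

/-- The block-gradient-descent step `g^s_{αf}(x) = x - α U_s ∇_s f(x)`. -/
def blockGradStep {n p : ℕ} (f : EuclideanSpace ℝ (Fin n) → ℝ) (α : ℝ)
    (blk : Fin n → Fin p) (s : Fin p) (x : EuclideanSpace ℝ (Fin n)) :
    EuclideanSpace ℝ (Fin n) :=
  (WithLp.equiv 2 (Fin n → ℝ)).symm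
    fun i => x i - if blk i = s then α * gradient f x i else 0

/-- The BCGD map `g_{αf} = g^p ∘ ⋯ ∘ g^1` (block 1 is applied first). -/
def bcgdMap {n p : ℕ} (f : EuclideanSpace ℝ (Fin n) → ℝ) (α : ℝ)
    (blk : Fin n → Fin p) (x : EuclideanSpace ℝ (Fin n)) : EuclideanSpace ℝ (Fin n) :=
  (List.finRange p).foldl (fun y s => blockGradStep f α blk s y) x

/-- The projection matrix `U_s U_sᵀ` onto the coordinates of block `s`. -/
def blockProj {n p : ℕ} (blk : Fin n → Fin p) (s : Fin p) : Matrix (Fin n) (Fin n) ℝ :=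
  Matrix.diagonal fun i => if blk i = s then 1 else 0

/-- Strictly block lower triangular part of a matrix. -/
def lowerBlockPart {n p : ℕ} (blk : Fin n → Fin p) (A : Matrix (Fin n) (Fin n) ℝ) :
    Matrix (Fin n) (Fin n) ℝ :=
  Matrix.of fun i j => if blk j < blk i then A i j else 0

/-- Strictly block upper triangular part of a matrix. -/
def upperBlockPart {n p : ℕ} (blk : Fin n → Fin p) (A : Matrix (Fin n) (Fin n) ℝ) :
    Matrix (Fin n) (Fin n) ℝ :=
  Matrix.of fun i j => if blk i < blk j then A i j else 0

/-- Spectral radius of a real matrix: the largest modulus of its complex eigenvalues. -/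
def specRad {ι : Type*} [Fintype ι] (M : Matrix ι ι ℝ) : ℝ :=
  sSup {r : ℝ | ∃ z : ℂ, IsEigenvalue M z ∧ r = ‖z‖}

/-!
At a critical point `x*` the Jacobian of the BCGD map is the product
`J = (1 - α P_{p-1} H) ⋯ (1 - α P_0 H)`, where `P_s = U_s U_sᵀ` and `H = ∇²f(x*)`. If `Λ` is the
strictly block lower part of `αH`, then `W = 1 + Λ` satisfies the Gauss–Seidel identity
`W (1 - J) = αH`, and `Q = W + Wᵀ - αH = 2 - α · (block diagonal of H)` is positive definite
because `αL < 1`. The Stein identity `(1 - J)ᴴ Q (1 - J) = αH - Jᴴ (αH) J` then says that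
`x ↦ xᴴ H x` does not increase along `x ↦ J x`, and strictly decreases unless `J x = x`.

Suppose every eigenvalue of `J` lies in the closed unit disc. An eigenvalue of modulus one must
then be `1`, and it is semisimple, with eigenvectors in `ker H`. Hence for every `x` the iterates
`Jᵏ x` converge to a vector of `ker H`, so `xᴴ H x ≥ 0`, contradicting the negative eigenvalue of
`H` at a strict saddle.
-/

open Finset
open scoped ComplexOrder RealInnerProductSpace

section GaussSeidel

variable {R : Type*} [Ring R] {P : ℕ → R}

/-- With `P s = U_s U_sᵀ` and `K = αH`, this is the Jacobian at a critical point of the first `m`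
block steps. -/
def blockSweep (P : ℕ → R) (K : R) (m : ℕ) : R :=
  ((List.range m).map fun s => 1 - P s * K).reverse.prod

def strictBlockLower (P : ℕ → R) (K : R) (m : ℕ) : R :=
  ∑ s ∈ range m, P s * K * ∑ t ∈ range s, P t

lemma one_sub_blockSweep_succ (P : ℕ → R) (K : R) (m : ℕ) :
    1 - blockSweep P K (m + 1) = (1 - blockSweep P K m) + P m * K * blockSweep P K m := by
  simp only [blockSweep, List.range_succ, List.map_append, List.reverse_append, List.prod_append,
    List.map_singleton, List.reverse_singleton, List.prod_singleton]
  noncomm_ring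

lemma strictBlockLower_succ (P : ℕ → R) (K : R) (m : ℕ) :
    strictBlockLower P K (m + 1) = strictBlockLower P K m + P m * K * ∑ t ∈ range m, P t :=
  sum_range_succ _ m

lemma OrthogonalIdempotents.sum_range_mul_eq_zero_of_le (hP : OrthogonalIdempotents P) {s m : ℕ}
    (hsm : s ≤ m) : (∑ t ∈ range s, P t) * P m = 0 := by
  rw [sum_mul]
  exact sum_eq_zero fun t ht => hP.ortho ((mem_range.mp ht).trans_le hsm).ne

lemma OrthogonalIdempotents.mul_sum_range_eq_zero (hP : OrthogonalIdempotents P) (m : ℕ) :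
    P m * ∑ t ∈ range m, P t = 0 := by
  rw [mul_sum]
  exact sum_eq_zero fun t ht => hP.ortho (mem_range.mp ht).ne'

lemma OrthogonalIdempotents.sum_range_mul_one_sub_blockSweep (hP : OrthogonalIdempotents P)
    (K : R) (m : ℕ) :
    (∑ s ∈ range m, P s) * (1 - blockSweep P K m) = 1 - blockSweep P K m := by
  induction m with
  | zero => simp [blockSweep]
  | succ m ih =>
    set S := ∑ s ∈ range m, P s
    set E := 1 - blockSweep P K m
    have hPE : P m * E = 0 := by rw [← ih, ← mul_assoc, hP.mul_sum_range_eq_zero, zero_mul]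
    rw [sum_range_succ, one_sub_blockSweep_succ]
    calc (S + P m) * (E + P m * K * blockSweep P K m)
        = S * E + S * P m * (K * blockSweep P K m) + P m * E
          + P m * P m * (K * blockSweep P K m) := by noncomm_ring
      _ = E + P m * K * blockSweep P K m := by
        rw [ih, hPE, hP.sum_range_mul_eq_zero_of_le le_rfl, (hP.idem m).eq]; noncomm_ring

theorem OrthogonalIdempotents.one_add_strictBlockLower_mul_one_sub_blockSweep
    (hP : OrthogonalIdempotents P) (K : R) (m : ℕ) :
    (1 + strictBlockLower P K m) * (1 - blockSweep P K m) = (∑ s ∈ range m, P s) * K := by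
  induction m with
  | zero => simp [blockSweep, strictBlockLower]
  | succ m ih =>
    have hΛP : strictBlockLower P K m * P m = 0 := by
      rw [strictBlockLower, sum_mul]
      exact sum_eq_zero fun s hs => by
        rw [mul_assoc, hP.sum_range_mul_eq_zero_of_le (mem_range.mp hs).le, mul_zero]
    set S := ∑ s ∈ range m, P s
    set Λ := strictBlockLower P K m
    set E := 1 - blockSweep P K m
    rw [strictBlockLower_succ, sum_range_succ, one_sub_blockSweep_succ]
    calc (1 + (Λ + P m * K * S)) * (E + P m * K * blockSweep P K m)
        = (1 + Λ) * E + P m * K * blockSweep P K m + Λ * P m * (K * blockSweep P K m)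
          + P m * K * (S * E) + P m * K * (S * P m) * (K * blockSweep P K m) := by
          noncomm_ring
      _ = (S + P m) * K := by
        rw [ih, hΛP, hP.sum_range_mul_one_sub_blockSweep, hP.sum_range_mul_eq_zero_of_le le_rfl]
        noncomm_ring

lemma strictBlockLower_add_star_add_sum [StarRing R] (hP : ∀ s, IsSelfAdjoint (P s)) {K : R}
    (hK : IsSelfAdjoint K) (m : ℕ) :
    strictBlockLower P K m + star (strictBlockLower P K m) + ∑ s ∈ range m, P s * K * P s
      = (∑ s ∈ range m, P s) * K * ∑ s ∈ range m, P s := by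
  induction m with
  | zero => simp [strictBlockLower]
  | succ m ih =>
    have hS : star (∑ t ∈ range m, P t) = ∑ t ∈ range m, P t := by
      rw [star_sum]; exact sum_congr rfl fun t _ => (hP t).star_eq
    rw [strictBlockLower_succ, star_add, star_mul, star_mul, hS, hK.star_eq, (hP m).star_eq,
      sum_range_succ, sum_range_succ]
    calc _
        = (strictBlockLower P K m + star (strictBlockLower P K m)
            + ∑ s ∈ range m, P s * K * P s) + P m * K * ∑ t ∈ range m, P t
          + (∑ t ∈ range m, P t) * (K * P m) + P m * K * P m := by abel
      _ = _ := by rw [ih]; noncomm_ring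

end GaussSeidel

theorem stein_identity {R : Type*} [Ring R] [StarRing R] {W J K : R} (hK : IsSelfAdjoint K)
    (hWJ : W * (1 - J) = K) : star (1 - J) * (W + star W - K) * (1 - J) = K - star J * K * J := by
  have hWJ' : star (1 - J) * star W = K := by rw [← star_mul, hWJ, hK.star_eq]
  calc star (1 - J) * (W + star W - K) * (1 - J)
      = star (1 - J) * (W * (1 - J)) + star (1 - J) * star W * (1 - J)
          - star (1 - J) * K * (1 - J) := by noncomm_ring
    _ = K - star J * K * J := by
      rw [hWJ, hWJ']
      simp only [star_sub, star_one]
      noncomm_ring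

lemma Module.End.tendsto_pow_apply_of_mem_maxGenEigenspace {𝕜 E : Type*} [NormedField 𝕜]
    [CompleteSpace 𝕜] [NormedAddCommGroup E] [NormedSpace 𝕜 E] {f : Module.End 𝕜 E} {μ : 𝕜}
    (hμ : ‖μ‖ < 1) {x : E} (hx : x ∈ f.maxGenEigenspace μ) :
    Tendsto (fun k => (f ^ k) x) atTop (𝓝 0) := by
  obtain ⟨k₀, hk₀⟩ := (f.mem_maxGenEigenspace μ x).mp hx
  set N := f - μ • 1
  have hcoeff (m : ℕ) : Tendsto (fun k : ℕ => (k.choose m : 𝕜) * μ ^ (k - m)) atTop (𝓝 0) :=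
    (tendsto_add_atTop_iff_nat m).mp <| by
      simpa using (summable_choose_mul_geometric_of_norm_lt_one m hμ).tendsto_atTop_zero
  have hexpand (k : ℕ) (hk : k₀ ≤ k) :
      (f ^ k) x = ∑ m ∈ range k₀, ((k.choose m : 𝕜) * μ ^ (k - m)) • (N ^ m) x := by
    have hterm (m : ℕ) : (N ^ m * (μ • 1) ^ (k - m) * (k.choose m : Module.End 𝕜 E)) x
        = ((k.choose m : 𝕜) * μ ^ (k - m)) • (N ^ m) x := by
      rw [smul_pow, one_pow, Module.End.mul_apply, Module.End.mul_apply, Module.End.natCast_apply,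
        LinearMap.smul_apply, Module.End.one_apply, map_smul, map_nsmul,
        ← Nat.cast_smul_eq_nsmul 𝕜, smul_smul, mul_comm]
    have hvanish : ∀ m ∈ Ico k₀ (k + 1), ((k.choose m : 𝕜) * μ ^ (k - m)) • (N ^ m) x = 0 :=
      fun m hm => by
        rw [← Nat.sub_add_cancel (mem_Ico.mp hm).1, pow_add, Module.End.mul_apply, hk₀, map_zero,
          smul_zero]
    rw [← sub_add_cancel f (μ • 1), ((Commute.one_right N).smul_right μ).add_pow,
      LinearMap.sum_apply, ← sum_range_add_sum_Ico _ (by omega : k₀ ≤ k + 1)]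
    simp only [hterm, sum_eq_zero hvanish, add_zero]
  have hsum := tendsto_finsetSum (range k₀) fun m _ => (hcoeff m).smul_const ((N ^ m) x)
  simp only [zero_smul, sum_const_zero] at hsum
  exact hsum.congr' (eventually_atTop.mpr ⟨k₀, fun k hk => (hexpand k hk).symm⟩)

namespace Matrix

variable {ι : Type*} [Fintype ι]

lemma star_dotProduct_conjTranspose_mul_mul_mulVec {α : Type*} [CommSemiring α] [StarRing α]
    (A M : Matrix ι ι α) (x : ι → α) :
    star x ⬝ᵥ ((Aᴴ * M * A) *ᵥ x) = star (A *ᵥ x) ⬝ᵥ (M *ᵥ (A *ᵥ x)) := by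
  rw [star_mulVec, ← dotProduct_mulVec, ← mulVec_mulVec, ← mulVec_mulVec]

lemma IsHermitian.star_dotProduct_mulVec_comm {α : Type*} [CommSemiring α] [StarRing α]
    {K : Matrix ι ι α} (hK : K.IsHermitian) (x y : ι → α) :
    star x ⬝ᵥ (K *ᵥ y) = star (K *ᵥ x) ⬝ᵥ y := by
  rw [star_mulVec, hK.eq, dotProduct_mulVec]

lemma star_dotProduct_map_ofReal_mulVec {M : Matrix ι ι ℝ} (hM : M.IsHermitian) (z : ι → ℂ) :
    star z ⬝ᵥ (M.map Complex.ofReal *ᵥ z)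
      = ((fun i => (z i).re) ⬝ᵥ (M *ᵥ fun i => (z i).re)
          + (fun i => (z i).im) ⬝ᵥ (M *ᵥ fun i => (z i).im) : ℝ) := by
  set a : ι → ℝ := fun i => (z i).re
  set b : ι → ℝ := fun i => (z i).im
  have hz : z = (Complex.ofReal ∘ a) + Complex.I • (Complex.ofReal ∘ b) := by
    funext i; simp [a, b, mul_comm Complex.I, Complex.re_add_im]
  have hstar : star z = (Complex.ofReal ∘ a) - Complex.I • (Complex.ofReal ∘ b) := by
    funext i; apply Complex.ext <;> simp [a, b]
  have hreal (u v : ι → ℝ) :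
      (Complex.ofReal ∘ u) ⬝ᵥ (M.map Complex.ofReal *ᵥ (Complex.ofReal ∘ v))
        = (u ⬝ᵥ M *ᵥ v : ℝ) := by
    have h : M.map Complex.ofReal *ᵥ (Complex.ofReal ∘ v) = Complex.ofReal ∘ (M *ᵥ v) :=
      funext fun i => (Complex.ofRealHom.map_mulVec M v i).symm
    rw [h]
    exact (Complex.ofRealHom.map_dotProduct u (M *ᵥ v)).symm
  have hsymm : b ⬝ᵥ M *ᵥ a = a ⬝ᵥ M *ᵥ b := by
    rw [dotProduct_mulVec, ← mulVec_transpose, (isHermitian_iff_isSymm.mp hM).eq, dotProduct_comm]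
  rw [hstar, hz]
  simp only [mulVec_add, mulVec_smul, dotProduct_add, sub_dotProduct, dotProduct_smul,
    smul_dotProduct, hreal, hsymm, smul_eq_mul]
  push_cast
  linear_combination (-((b ⬝ᵥ M *ᵥ b : ℝ) : ℂ)) * Complex.I_sq

lemma PosDef.map_ofReal {M : Matrix ι ι ℝ} (hM : M.PosDef) : (M.map Complex.ofReal).PosDef := by
  refine PosDef.of_dotProduct_mulVec_pos
    (hM.isHermitian.map _ fun x => (Complex.conj_ofReal x).symm) fun z hz => ?_
  rw [star_dotProduct_map_ofReal_mulVec hM.isHermitian, Complex.zero_lt_real]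
  have hnonneg (u : ι → ℝ) : 0 ≤ u ⬝ᵥ M *ᵥ u := by
    simpa using hM.posSemidef.dotProduct_mulVec_nonneg u
  have hpos {u : ι → ℝ} (hu : u ≠ 0) : 0 < u ⬝ᵥ M *ᵥ u := by
    simpa using hM.dotProduct_mulVec_pos hu
  by_cases hre : (fun i => (z i).re) = 0
  · have him : (fun i => (z i).im) ≠ 0 := fun him => hz <| funext fun i =>
      Complex.ext (congrFun hre i) (congrFun him i)
    exact add_pos_of_nonneg_of_pos (hnonneg _) (hpos him)
  · exact add_pos_of_pos_of_nonneg (hpos hre) (hnonneg _)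

variable [DecidableEq ι]

lemma dotProduct_mulVec_le_of_norm_toEuclideanCLM_le {A : Matrix ι ι ℝ} {c : ℝ}
    (hA : ‖toEuclideanCLM (𝕜 := ℝ) A‖ ≤ c) (v : ι → ℝ) : v ⬝ᵥ A *ᵥ v ≤ c * (v ⬝ᵥ v) := by
  set x : EuclideanSpace ℝ ι := WithLp.toLp 2 v
  have hnorm : ‖x‖ ^ 2 = v ⬝ᵥ v := by
    rw [EuclideanSpace.norm_sq_eq]
    simp [x, dotProduct, sq]
  calc v ⬝ᵥ A *ᵥ v = ⟪x, toEuclideanCLM (𝕜 := ℝ) A x⟫ := (inner_toEuclideanCLM A x x).symm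
    _ ≤ ‖x‖ * ‖toEuclideanCLM (𝕜 := ℝ) A x‖ := real_inner_le_norm _ _
    _ ≤ ‖x‖ * (c * ‖x‖) := by gcongr; exact (ContinuousLinearMap.le_opNorm _ _).trans (by gcongr)
    _ = c * (v ⬝ᵥ v) := by rw [← hnorm]; ring

variable {W J K : Matrix ι ι ℂ}

lemma stein_dotProduct (hK : K.IsHermitian) (hWJ : W * (1 - J) = K) (x : ι → ℂ) :
    star ((1 - J) *ᵥ x) ⬝ᵥ ((W + Wᴴ - K) *ᵥ ((1 - J) *ᵥ x))
      = star x ⬝ᵥ (K *ᵥ x) - star (J *ᵥ x) ⬝ᵥ (K *ᵥ (J *ᵥ x)) := by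
  rw [← star_dotProduct_conjTranspose_mul_mul_mulVec, ← star_eq_conjTranspose,
    ← star_eq_conjTranspose, stein_identity hK hWJ, sub_mulVec, dotProduct_sub,
    star_eq_conjTranspose, star_dotProduct_conjTranspose_mul_mul_mulVec]

lemma dotProduct_mulVec_mulVec_le (hK : K.IsHermitian) (hWJ : W * (1 - J) = K)
    (hQ : (W + Wᴴ - K).PosSemidef) (x : ι → ℂ) :
    star (J *ᵥ x) ⬝ᵥ (K *ᵥ (J *ᵥ x)) ≤ star x ⬝ᵥ (K *ᵥ x) := by
  rw [← sub_nonneg, ← stein_dotProduct hK hWJ]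
  exact hQ.dotProduct_mulVec_nonneg _

lemma sub_mulVec_eq_zero_of_dotProduct_eq (hK : K.IsHermitian) (hWJ : W * (1 - J) = K)
    (hQ : (W + Wᴴ - K).PosDef) {x : ι → ℂ}
    (hx : star (J *ᵥ x) ⬝ᵥ (K *ᵥ (J *ᵥ x)) = star x ⬝ᵥ (K *ᵥ x)) : (1 - J) *ᵥ x = 0 := by
  by_contra h
  have := hQ.dotProduct_mulVec_pos h
  rw [stein_dotProduct hK hWJ, hx, sub_self] at this
  exact lt_irrefl _ this

lemma eq_one_of_mulVec_eq_smul_of_norm_eq_one (hK : K.IsHermitian) (hWJ : W * (1 - J) = K)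
    (hQ : (W + Wᴴ - K).PosDef) {μ : ℂ} {v : ι → ℂ} (hv : v ≠ 0) (hJv : J *ᵥ v = μ • v)
    (hμ : ‖μ‖ = 1) : μ = 1 := by
  have hμμ : star μ * μ = 1 := by
    rw [Complex.star_def, Complex.conj_mul', hμ]; norm_num
  have hfix := sub_mulVec_eq_zero_of_dotProduct_eq hK hWJ hQ (x := v) (by
    rw [hJv, mulVec_smul, star_smul, smul_dotProduct, dotProduct_smul, smul_smul, smul_eq_mul,
      hμμ, one_mul])
  rw [sub_mulVec, one_mulVec, hJv, ← one_smul ℂ v, smul_smul, mul_one, ← sub_smul,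
    smul_eq_zero, sub_eq_zero] at hfix
  exact (hfix.resolve_right hv).symm

lemma mulVec_eq_zero_of_sub_mulVec_eq_zero (hWJ : W * (1 - J) = K) {y : ι → ℂ}
    (hy : (1 - J) *ᵥ y = 0) : K *ᵥ y = 0 := by
  rw [← hWJ, ← mulVec_mulVec, hy, mulVec_zero]

lemma sub_mulVec_eq_zero_of_sub_mulVec_sub_mulVec_eq_zero (hK : K.IsHermitian)
    (hWJ : W * (1 - J) = K) (hQ : (W + Wᴴ - K).PosDef) {x : ι → ℂ}
    (hx : (1 - J) *ᵥ ((1 - J) *ᵥ x) = 0) : (1 - J) *ᵥ x = 0 := by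
  set y := (1 - J) *ᵥ x with hy
  have hKy : K *ᵥ y = 0 := mulVec_eq_zero_of_sub_mulVec_eq_zero hWJ hx
  have hJx : J *ᵥ x = x - y := by rw [hy, sub_mulVec, one_mulVec, sub_sub_cancel]
  refine sub_mulVec_eq_zero_of_dotProduct_eq hK hWJ hQ ?_
  rw [hJx, mulVec_sub, hKy, sub_zero, star_sub, sub_dotProduct,
    hK.star_dotProduct_mulVec_comm y, hKy, star_zero, zero_dotProduct, sub_zero]

lemma mulVec_eq_self_of_mem_maxGenEigenspace_one (hK : K.IsHermitian) (hWJ : W * (1 - J) = K)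
    (hQ : (W + Wᴴ - K).PosDef) {y : ι → ℂ}
    (hy : y ∈ Module.End.maxGenEigenspace (toLin' J) 1) : J *ᵥ y = y := by
  obtain ⟨k, hk⟩ := (Module.End.mem_maxGenEigenspace _ 1 y).mp hy
  suffices ∀ k (z : ι → ℂ),
      ((toLin' J - (1 : ℂ) • (1 : Module.End ℂ (ι → ℂ))) ^ k) z = 0 → (1 - J) *ᵥ z = 0 by
    have h := this k y hk
    rwa [sub_mulVec, one_mulVec, sub_eq_zero, eq_comm] at h
  intro k
  induction k with
  | zero => intro z hz; rw [pow_zero, Module.End.one_apply] at hz; rw [hz, mulVec_zero]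
  | succ k ih =>
    intro z hz
    rw [pow_succ, Module.End.mul_apply] at hz
    have hstep : (toLin' J - (1 : ℂ) • (1 : Module.End ℂ (ι → ℂ))) z = -((1 - J) *ᵥ z) := by
      simp [sub_mulVec]
    refine sub_mulVec_eq_zero_of_sub_mulVec_sub_mulVec_eq_zero hK hWJ hQ ?_
    rw [← neg_eq_zero, ← mulVec_neg, ← hstep]
    exact ih _ hz

lemma tendsto_pow_apply_of_mem_maxGenEigenspace_of_ne_one (hK : K.IsHermitian)
    (hWJ : W * (1 - J) = K) (hQ : (W + Wᴴ - K).PosDef)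
    (hJ : ∀ μ, Module.End.HasEigenvalue (toLin' J) μ → ‖μ‖ ≤ 1) {μ : ℂ} (hμ1 : μ ≠ 1)
    {y : ι → ℂ} (hy : y ∈ Module.End.maxGenEigenspace (toLin' J) μ) :
    Tendsto (fun k => (toLin' J ^ k) y) atTop (𝓝 0) := by
  by_cases hy0 : y = 0
  · simp [hy0]
  have hμ : Module.End.HasEigenvalue (toLin' J) μ :=
    (Module.End.hasUnifEigenvalue_iff_hasUnifEigenvalue_one (by simp)).mp
      ((Submodule.ne_bot_iff _).mpr ⟨y, hy, hy0⟩)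
  obtain ⟨v, hv⟩ := hμ.exists_hasEigenvector
  have hlt : ‖μ‖ < 1 := (hJ μ hμ).lt_of_ne fun h =>
    hμ1 (eq_one_of_mulVec_eq_smul_of_norm_eq_one hK hWJ hQ hv.2 hv.apply_eq_smul h)
  exact Module.End.tendsto_pow_apply_of_mem_maxGenEigenspace hlt hy

theorem posSemidef_of_forall_hasEigenvalue_norm_le_one (hK : K.IsHermitian)
    (hWJ : W * (1 - J) = K) (hQ : (W + Wᴴ - K).PosDef)
    (hJ : ∀ μ, Module.End.HasEigenvalue (toLin' J) μ → ‖μ‖ ≤ 1) : K.PosSemidef := by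
  refine PosSemidef.of_dotProduct_mulVec_nonneg hK fun x => ?_
  set f : Module.End ℂ (ι → ℂ) := toLin' J
  obtain ⟨d, hd, hdx⟩ := (Submodule.mem_iSup_iff_exists_finsupp _ x).mp
    (f.iSup_maxGenEigenspace_eq_top.symm ▸ Submodule.mem_top)
  have hfix : f (d 1) = d 1 := mulVec_eq_self_of_mem_maxGenEigenspace_one hK hWJ hQ (hd 1)
  have hcomponent (μ : ℂ) :
      Tendsto (fun k => (f ^ k) (d μ)) atTop (𝓝 (if μ = 1 then d μ else 0)) := by
    split_ifs with hμ1
    · subst hμ1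
      simp only [Module.End.pow_apply, Function.iterate_fixed hfix, tendsto_const_nhds]
    · exact tendsto_pow_apply_of_mem_maxGenEigenspace_of_ne_one hK hWJ hQ hJ hμ1 (hd μ)
  have hlim : Tendsto (fun k => (f ^ k) x) atTop (𝓝 (d 1)) := by
    have h := tendsto_finsetSum d.support fun μ _ => hcomponent μ
    rw [show (∑ μ ∈ d.support, if μ = 1 then d μ else 0) = d 1 from
      Finsupp.sum_ite_self_eq' d 1] at h
    simpa only [← hdx, Finsupp.sum, map_sum] using h
  have hanti : Antitone fun k => star ((f ^ k) x) ⬝ᵥ (K *ᵥ (f ^ k) x) :=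
    antitone_nat_of_succ_le fun k => by
      rw [pow_succ', Module.End.mul_apply]
      exact dotProduct_mulVec_mulVec_le hK hWJ hQ.posSemidef _
  have hKd : K *ᵥ d 1 = 0 := by
    refine mulVec_eq_zero_of_sub_mulVec_eq_zero hWJ ?_
    rw [sub_mulVec, one_mulVec, sub_eq_zero]
    exact hfix.symm
  have hq : Continuous fun y : ι → ℂ => star y ⬝ᵥ (K *ᵥ y) := by fun_prop
  simpa [hKd] using hanti.le_of_tendsto ((hq.tendsto _).comp hlim) 0

end Matrix

theorem exists_isEigenvalue_one_lt_norm {ι : Type*} [Fintype ι] [DecidableEq ι]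
    {W J K : Matrix ι ι ℝ} (hK : K.IsHermitian) (hWJ : W * (1 - J) = K)
    (hQ : (W + Wᴴ - K).PosDef) {v : ι → ℝ} (hv : v ⬝ᵥ K *ᵥ v < 0) :
    ∃ z : ℂ, IsEigenvalue J z ∧ 1 < ‖z‖ := by
  by_contra! hJ
  have hconj : Function.Semiconj Complex.ofReal star star := fun x => (Complex.conj_ofReal x).symm
  have hKc : (K.map Complex.ofReal).PosSemidef := by
    refine posSemidef_of_forall_hasEigenvalue_norm_le_one (W := W.map Complex.ofReal)
      (J := J.map Complex.ofReal) (hK.map _ hconj) ?_ ?_ fun μ hμ => hJ μ ?_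
    · have h := congrArg Complex.ofRealHom.mapMatrix hWJ
      rwa [map_mul, map_sub, map_one] at h
    · have h := hQ.map_ofReal
      rwa [Matrix.map_sub _ Complex.ofReal_sub, Matrix.map_add _ Complex.ofReal_add,
        conjTranspose_map _ hconj] at h
    · obtain ⟨u, hu⟩ := hμ.exists_hasEigenvector
      exact ⟨u, hu.2, hu.apply_eq_smul⟩
  have h := hKc.dotProduct_mulVec_nonneg (Complex.ofReal ∘ v)
  rw [star_dotProduct_map_ofReal_mulVec hK] at h
  simp only [Function.comp_apply, Complex.ofReal_re, Complex.ofReal_im, zero_dotProduct', add_zero,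
    Complex.zero_le_real] at h
  exact h.not_gt hv

theorem hasFDerivAt_foldl {𝕜 E ι : Type*} [NontriviallyNormedField 𝕜] [NormedAddCommGroup E]
    [NormedSpace 𝕜 E] {g : ι → E → E} {D : ι → E →L[𝕜] E} {x : E} (hfix : ∀ s, g s x = x)
    (hg : ∀ s, HasFDerivAt (g s) (D s) x) (l : List ι) :
    HasFDerivAt (fun y => l.foldl (fun z s => g s z) y) (l.map D).reverse.prod x := by
  induction l with
  | nil => exact hasFDerivAt_id x
  | cons s l ih =>
    rw [List.map_cons, List.reverse_cons, List.prod_append, List.prod_singleton]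
    exact (hfix s ▸ ih).comp x (hg s)

section Gradient

variable {E : Type*} [NormedAddCommGroup E] [InnerProductSpace ℝ E] [CompleteSpace E] {f : E → ℝ}

lemma gradient_eq_toDual_symm_comp_fderiv (f : E → ℝ) :
    gradient f = (InnerProductSpace.toDual ℝ E).symm ∘ fderiv ℝ f := rfl

lemma ContDiff.differentiable_gradient (hf : ContDiff ℝ 2 f) : Differentiable ℝ (gradient f) := by
  rw [gradient_eq_toDual_symm_comp_fderiv]
  exact (InnerProductSpace.toDual ℝ E).symm.differentiable.comp
    ((hf.fderiv_right (by norm_num)).differentiable one_ne_zero)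

lemma inner_fderiv_gradient_apply (f : E → ℝ) (x u v : E) :
    ⟪fderiv ℝ (gradient f) x u, v⟫ = fderiv ℝ (fderiv ℝ f) x u v := by
  rw [gradient_eq_toDual_symm_comp_fderiv, LinearIsometryEquiv.comp_fderiv]
  exact InnerProductSpace.toDual_symm_apply

lemma ContDiff.isSelfAdjoint_fderiv_gradient (hf : ContDiff ℝ 2 f) (x : E) :
    IsSelfAdjoint (fderiv ℝ (gradient f) x) := by
  have hsymm := hf.contDiffAt.isSymmSndFDerivAt (x := x) (by simp)
  refine ContinuousLinearMap.isSelfAdjoint_iff_isSymmetric.mpr fun u v => ?_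
  change ⟪fderiv ℝ (gradient f) x u, v⟫ = ⟪u, fderiv ℝ (gradient f) x v⟫
  rw [real_inner_comm _ u, inner_fderiv_gradient_apply, inner_fderiv_gradient_apply, hsymm.eq]

end Gradient

section Hessian

variable {ι : Type*} [Fintype ι] [DecidableEq ι] {f : EuclideanSpace ℝ ι → ℝ}

lemma jacobianMatrix_eq_toEuclideanCLM_symm (g : EuclideanSpace ℝ ι → EuclideanSpace ℝ ι)
    (x : EuclideanSpace ℝ ι) :
    jacobianMatrix g x = (toEuclideanCLM (𝕜 := ℝ)).symm (fderiv ℝ g x) := by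
  ext i j
  rw [jacobianMatrix, of_apply]
  generalize fderiv ℝ g x = T
  obtain ⟨A, rfl⟩ : ∃ A, toEuclideanCLM (𝕜 := ℝ) A = T := ⟨_, StarAlgEquiv.apply_symm_apply _ T⟩
  simp

lemma hessianMatrix_eq_toEuclideanCLM_symm (f : EuclideanSpace ℝ ι → ℝ) (x : EuclideanSpace ℝ ι) :
    hessianMatrix f x = (toEuclideanCLM (𝕜 := ℝ)).symm (fderiv ℝ (gradient f) x) :=
  jacobianMatrix_eq_toEuclideanCLM_symm _ x

lemma ContDiff.isHermitian_hessianMatrix (hf : ContDiff ℝ 2 f) (x : EuclideanSpace ℝ ι) :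
    (hessianMatrix f x).IsHermitian := by
  rw [hessianMatrix_eq_toEuclideanCLM_symm, isHermitian_iff_isSelfAdjoint, IsSelfAdjoint]
  refine EquivLike.injective (toEuclideanCLM (𝕜 := ℝ) (n := ι)) ?_
  rw [map_star, StarAlgEquiv.apply_symm_apply, (hf.isSelfAdjoint_fderiv_gradient x).star_eq]

lemma dotProduct_hessianMatrix_mulVec_le {L : NNReal} (hlip : LipschitzWith L (gradient f))
    (x : EuclideanSpace ℝ ι) (v : ι → ℝ) : v ⬝ᵥ hessianMatrix f x *ᵥ v ≤ L * (v ⬝ᵥ v) := by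
  refine dotProduct_mulVec_le_of_norm_toEuclideanCLM_le ?_ v
  rw [hessianMatrix_eq_toEuclideanCLM_symm, StarAlgEquiv.apply_symm_apply]
  exact norm_fderiv_le_of_lipschitz ℝ hlip

end Hessian

section BlockCoordinateDescent

variable {n p : ℕ} (blk : Fin n → Fin p)

/-- `blockProj`, indexed by `ℕ` so that a sweep can be built up one block at a time. -/
def blockIndicator (m : ℕ) : Matrix (Fin n) (Fin n) ℝ :=
  diagonal fun i => if (blk i : ℕ) = m then 1 else 0

lemma blockProj_eq_blockIndicator (s : Fin p) : blockProj blk s = blockIndicator blk s := by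
  simp [blockProj, blockIndicator, Fin.val_inj]

lemma orthogonalIdempotents_blockIndicator : OrthogonalIdempotents (blockIndicator blk) where
  idem s := by
    rw [IsIdempotentElem, blockIndicator, diagonal_mul_diagonal]
    congr 1; funext i; split_ifs <;> simp
  ortho s t hst := by
    change blockIndicator blk s * blockIndicator blk t = 0
    rw [blockIndicator, blockIndicator, diagonal_mul_diagonal, ← diagonal_zero]
    congr 1; funext i; split_ifs <;> simp_all

lemma isSelfAdjoint_blockIndicator (s : ℕ) : IsSelfAdjoint (blockIndicator blk s) :=
  isHermitian_iff_isSelfAdjoint.mp (isHermitian_diagonal _)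

lemma sum_range_blockIndicator : ∑ s ∈ range p, blockIndicator blk s = 1 := by
  ext i j
  by_cases hij : i = j
  · subst hij; simp [blockIndicator, Matrix.sum_apply]
  · simp [blockIndicator, Matrix.sum_apply, hij]

variable {f : EuclideanSpace ℝ (Fin n) → ℝ} {α : ℝ} {x : EuclideanSpace ℝ (Fin n)}

lemma blockGradStep_eq (s : Fin p) : blockGradStep f α blk s
    = fun x => x - toEuclideanCLM (𝕜 := ℝ) (blockProj blk s) (α • gradient f x) := by
  funext x; ext i
  simp [blockGradStep, blockProj, mulVec_diagonal]

lemma hasFDerivAt_blockGradStep {D : EuclideanSpace ℝ (Fin n) →L[ℝ] EuclideanSpace ℝ (Fin n)}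
    (hD : HasFDerivAt (gradient f) D x) (s : Fin p) :
    HasFDerivAt (blockGradStep f α blk s)
      (1 - α • (toEuclideanCLM (𝕜 := ℝ) (blockProj blk s) * D)) x := by
  rw [blockGradStep_eq]
  refine ((hasFDerivAt_id x).sub ((toEuclideanCLM (𝕜 := ℝ) (blockProj blk s)).hasFDerivAt.comp x
    (hD.const_smul α))).congr_fderiv ?_
  ext v : 1
  simp

theorem jacobianMatrix_bcgdMap (hf : ContDiff ℝ 2 f) (hcrit : gradient f x = 0) :
    jacobianMatrix (bcgdMap f α blk) x
      = blockSweep (blockIndicator blk) (α • hessianMatrix f x) p := by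
  have hfix (s : Fin p) : blockGradStep f α blk s x = x := by simp [blockGradStep_eq, hcrit]
  have hfold : HasFDerivAt (bcgdMap f α blk) _ x := hasFDerivAt_foldl hfix
    (hasFDerivAt_blockGradStep blk (hf.differentiable_gradient x).hasFDerivAt) (List.finRange p)
  rw [jacobianMatrix_eq_toEuclideanCLM_symm, hfold.fderiv, map_list_prod, List.map_reverse,
    List.map_map, blockSweep, ← List.map_coe_finRange_eq_range, List.map_map]
  congr 2
  refine List.map_congr_left fun s _ => ?_
  simp [hessianMatrix, jacobianMatrix_eq_toEuclideanCLM_symm, blockProj_eq_blockIndicator]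

theorem posDef_one_add_strictBlockLower_add_conjTranspose_sub {K : Matrix (Fin n) (Fin n) ℝ}
    (hK : K.IsHermitian) {c : ℝ} (hc : c < 2) (hbound : ∀ v, v ⬝ᵥ K *ᵥ v ≤ c * (v ⬝ᵥ v)) :
    ((1 + strictBlockLower (blockIndicator blk) K p)
      + (1 + strictBlockLower (blockIndicator blk) K p)ᴴ - K).PosDef := by
  set P := blockIndicator blk
  set Λ := strictBlockLower P K p
  set D := ∑ s ∈ range p, P s * K * P s
  have hsplit : Λ + star Λ + D = K := by
    simpa [P, sum_range_blockIndicator] using strictBlockLower_add_star_add_sum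
      (isSelfAdjoint_blockIndicator blk) (isHermitian_iff_isSelfAdjoint.mp hK) p
  have hQ : (1 + Λ) + (1 + Λ)ᴴ - K = 1 + 1 - D :=
    calc (1 + Λ) + (1 + Λ)ᴴ - K = 1 + 1 - D + (Λ + star Λ + D - K) := by
          rw [conjTranspose_add, conjTranspose_one, star_eq_conjTranspose]; abel
      _ = 1 + 1 - D := by rw [hsplit, sub_self, add_zero]
  have hP (s : ℕ) : (P s)ᴴ * 1 * P s = P s := by
    rw [mul_one, ← star_eq_conjTranspose, (isSelfAdjoint_blockIndicator blk s).star_eq,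
      ((orthogonalIdempotents_blockIndicator blk).idem s).eq]
  have hD (v : Fin n → ℝ) : star v ⬝ᵥ (D *ᵥ v) ≤ c * (star v ⬝ᵥ v) :=
    calc star v ⬝ᵥ (D *ᵥ v) = ∑ s ∈ range p, star (P s *ᵥ v) ⬝ᵥ (K *ᵥ (P s *ᵥ v)) := by
          rw [sum_mulVec, dotProduct_sum]
          refine sum_congr rfl fun s _ => ?_
          rw [← star_dotProduct_conjTranspose_mul_mul_mulVec, ← star_eq_conjTranspose,
            (isSelfAdjoint_blockIndicator blk s).star_eq]
      _ ≤ ∑ s ∈ range p, c * (star (P s *ᵥ v) ⬝ᵥ (1 *ᵥ (P s *ᵥ v))) :=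
          sum_le_sum fun s _ => by simpa using hbound (P s *ᵥ v)
      _ = c * (star v ⬝ᵥ v) := by
          rw [← mul_sum]
          simp_rw [← star_dotProduct_conjTranspose_mul_mul_mulVec, hP]
          rw [← dotProduct_sum, ← sum_mulVec, sum_range_blockIndicator, one_mulVec]
  refine PosDef.of_dotProduct_mulVec_pos ((isHermitian_add_transpose_self _).sub hK) fun v hv => ?_
  have hvv : 0 < star v ⬝ᵥ v := dotProduct_star_self_pos_iff.mpr hv
  rw [hQ, sub_mulVec, dotProduct_sub, add_mulVec, one_mulVec, dotProduct_add]
  linarith [hD v, mul_lt_mul_of_pos_right hc hvv]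

end BlockCoordinateDescent

theorem bcgd_jacobian_has_expanding_eigenvalue_general
    {n p : ℕ} (blk : Fin n → Fin p)
    (f : EuclideanSpace ℝ (Fin n) → ℝ) (hf : ContDiff ℝ 2 f)
    (L : ℝ) (hL : 0 < L) (hlip : LipschitzWith (Real.toNNReal L) (gradient f))
    (α : ℝ) (hα : 0 < α) (hα' : α < 1 / L)
    (xs : EuclideanSpace ℝ (Fin n)) (hxs : IsStrictSaddle f xs) :
    ∃ z : ℂ, IsEigenvalue (jacobianMatrix (bcgdMap f α blk) xs) z ∧ 1 < ‖z‖ := by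
  obtain ⟨hcrit, c, w, hc, hw, hHw⟩ := hxs
  set H := hessianMatrix f xs
  have hK : (α • H).IsHermitian := (hf.isHermitian_hessianMatrix xs).smul (IsSelfAdjoint.all α)
  have hαL : α * L < 1 := (lt_div_iff₀ hL).mp hα'
  have hbound (v : Fin n → ℝ) : v ⬝ᵥ (α • H) *ᵥ v ≤ α * L * (v ⬝ᵥ v) := by
    have h := dotProduct_hessianMatrix_mulVec_le hlip xs v
    rw [Real.coe_toNNReal L hL.le] at h
    rw [smul_mulVec, dotProduct_smul, smul_eq_mul, mul_assoc]
    exact mul_le_mul_of_nonneg_left h hα.le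
  have hw2 : 0 < w ⬝ᵥ w := by simpa using dotProduct_star_self_pos_iff.mpr hw
  rw [jacobianMatrix_bcgdMap blk hf hcrit]
  refine exists_isEigenvalue_one_lt_norm hK ?_
    (posDef_one_add_strictBlockLower_add_conjTranspose_sub blk hK (by linarith) hbound) (v := w) ?_
  · simpa [sum_range_blockIndicator] using
      (orthogonalIdempotents_blockIndicator blk).one_add_strictBlockLower_mul_one_sub_blockSweep
        (α • H) p
  · rw [smul_mulVec, hHw, smul_smul, dotProduct_smul, smul_eq_mul]
    exact mul_neg_of_neg_of_pos (mul_neg_of_pos_of_neg hα hc) hw2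

/-- the Jacobian of the BCGD map at a strict saddle point has an
eigenvalue of magnitude strictly greater than one. -/
theorem bcgd_jacobian_has_expanding_eigenvalue
    {n p : ℕ} (hp : 0 < p) (blk : Fin n → Fin p)
    (hmono : Monotone blk) (hsurj : Function.Surjective blk)
    (f : EuclideanSpace ℝ (Fin n) → ℝ) (hf : ContDiff ℝ 2 f)
    (L : ℝ) (hL : 0 < L) (hlip : LipschitzWith (Real.toNNReal L) (gradient f))
    (α : ℝ) (hα : 0 < α) (hα' : α < 1 / L)
    (xs : EuclideanSpace ℝ (Fin n)) (hxs : IsStrictSaddle f xs) :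
    ∃ z : ℂ, IsEigenvalue (jacobianMatrix (bcgdMap f α blk) xs) z ∧ 1 < ‖z‖ :=
  bcgd_jacobian_has_expanding_eigenvalue_general blk f hf L hL hlip α hα hα' xs hxs

end
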